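/- arXiv:2101.11486 — 6 statements merged into one kernel-verified Lean document; each statement's English description precedes it below -/
import Mathlib

section
/- Suppose (X,d) is a connected metric space containing at least two points, and μ is a Borel measure on X that is positive and finite on every open ball. If there exist constants C > 0 and θ > 0 such that μ(B(x,r)) ≥ C·(r/R)^θ·μ(B(x,R)) for every x ∈ X and all radii 0 < r ≤ R < 2·diam(X), then θ ≥ 1. -/
open MeasureTheory Metric
open scoped ENNReal

/-- **Proposition 3.1.** In a connected metric space with at least two points,
equipped with a Borel measure that is positive and finite on balls, a uniform
lower volume-ratio bound `μ(B(x,r)) ≥ C (r/R)^θ μ(B(x,R))` for all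
`0 < r ≤ R < 2 diam X` forces `θ ≥ 1`. -/
theorem connected_lower_volume_ratio_exponent_ge_one
    {X : Type*} [MetricSpace X] [MeasurableSpace X] [BorelSpace X]
    [ConnectedSpace X] (htwo : ∃ x y : X, x ≠ y)
    (μ : Measure X)
    (hpos : ∀ (x : X) (r : ℝ), 0 < r → 0 < μ (ball x r))
    (hfin : ∀ (x : X) (r : ℝ), μ (ball x r) < ⊤)
    (C θ : ℝ) (hC : 0 < C) (hθ : 0 < θ)
    (hratio : ∀ (x : X) (r R : ℝ), 0 < r → r ≤ R →
      ENNReal.ofReal R < 2 * EMetric.diam (Set.univ : Set X) →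
      ENNReal.ofReal (C * (r / R) ^ θ) * μ (ball x R) ≤ μ (ball x r)) :
    1 ≤ θ := by
  by_contra hcon
  push_neg at hcon
  obtain ⟨a, b, hab⟩ := htwo
  have hδ : 0 < dist a b := dist_pos.mpr hab
  set d : ℝ := 3 / 4 * dist a b with hd_def
  have hd : 0 < d := by positivity
  have hdd : d < dist a b := by rw [hd_def]; linarith
  have hdiam : ENNReal.ofReal (2 * d) < 2 * EMetric.diam (Set.univ : Set X) := by
    have h1 : ENNReal.ofReal (dist a b) ≤ EMetric.diam (Set.univ : Set X) := by
      rw [← edist_dist]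
      exact EMetric.edist_le_diam_of_mem (Set.mem_univ a) (Set.mem_univ b)
    calc ENNReal.ofReal (2 * d) < ENNReal.ofReal (2 * dist a b) := by
          rw [ENNReal.ofReal_lt_ofReal_iff (by positivity)]; linarith
      _ = 2 * ENNReal.ofReal (dist a b) := by
          rw [ENNReal.ofReal_mul (by norm_num)]; norm_num
      _ ≤ 2 * EMetric.diam (Set.univ : Set X) := by gcongr
  have key : ∀ n : ℕ, 0 < n → (n : ℝ) * (C * (1 / (4 * n)) ^ θ) ≤ 1 := by
    intro n hn
    have hn' : (0:ℝ) < n := Nat.cast_pos.mpr hn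
    set r : ℝ := d / (2 * n) with hr_def
    have hr : 0 < r := by positivity
    have hrd : 2 * (n:ℝ) * r = d := by rw [hr_def]; field_simp
    have hz : ∀ k : Fin n, ∃ w : X, dist a w = (2 * (k:ℝ) + 1) * r := by
      intro k
      have hk : (k:ℝ) + 1 ≤ n := by exact_mod_cast k.isLt
      have hub : (2 * (k:ℝ) + 1) * r ≤ d := by nlinarith
      have hmem : (2 * (k:ℝ) + 1) * r ∈ Set.Icc (dist a a) (dist a b) := by
        constructor
        · rw [dist_self]; positivity
        · linarith
      have hcont : Continuous fun y : X => dist a y := continuous_const.dist continuous_id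
      obtain ⟨w, hw⟩ := intermediate_value_univ a b hcont hmem
      exact ⟨w, hw⟩
    choose z hzd using hz
    have hub : ∀ k : Fin n, (2 * (k:ℝ) + 1) * r ≤ d := by
      intro k
      have hk : (k:ℝ) + 1 ≤ n := by exact_mod_cast k.isLt
      nlinarith
    have hdisj : Pairwise (Function.onFun Disjoint fun k : Fin n => ball (z k) r) := by
      intro k j hkj
      have habs : (1:ℝ) ≤ |(k:ℝ) - (j:ℝ)| := by
        have hne : ((k:ℕ):ℤ) - ((j:ℕ):ℤ) ≠ 0 := by
          rw [sub_ne_zero]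
          exact_mod_cast fun h => hkj (Fin.ext h)
        have h1 : (1:ℤ) ≤ |((k:ℕ):ℤ) - ((j:ℕ):ℤ)| := Int.one_le_abs hne
        have h2 : (1:ℝ) ≤ |(((k:ℕ):ℤ):ℝ) - (((j:ℕ):ℤ):ℝ)| := by
          rw [← Int.cast_sub, ← Int.cast_abs]
          exact_mod_cast h1
        push_cast at h2
        exact h2
      apply ball_disjoint_ball
      have h1 : |dist (z k) a - dist (z j) a| ≤ dist (z k) (z j) := abs_dist_sub_le _ _ _
      rw [dist_comm (z k) a, dist_comm (z j) a, hzd k, hzd j] at h1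
      have heq : (2 * (k:ℝ) + 1) * r - (2 * (j:ℝ) + 1) * r = 2 * r * ((k:ℝ) - (j:ℝ)) := by ring
      rw [heq, abs_mul, abs_of_pos (by positivity)] at h1
      nlinarith
    have hsub : (⋃ k, ball (z k) r) ⊆ ball a d := by
      intro y hy
      rw [Set.mem_iUnion] at hy
      obtain ⟨k, hk⟩ := hy
      rw [mem_ball] at hk ⊢
      have h1 := dist_triangle y (z k) a
      rw [dist_comm (z k) a, hzd k] at h1
      have hk' : (k:ℝ) + 1 ≤ n := by exact_mod_cast k.isLt
      nlinarith
    have hball : ∀ k : Fin n,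
        ENNReal.ofReal (C * (1 / (4 * n)) ^ θ) * μ (ball a d) ≤ μ (ball (z k) r) := by
      intro k
      have hsub2 : ball a d ⊆ ball (z k) (2 * d) := by
        intro y hy
        rw [mem_ball] at hy ⊢
        have h1 := dist_triangle y a (z k)
        have h2 := hub k
        rw [hzd k] at h1
        have h3 : dist y a = dist a y := dist_comm y a
        linarith [dist_comm y a ▸ hy]
      have hn1 : (1:ℝ) ≤ n := Nat.one_le_cast.mpr hn
      have hr2 : r ≤ 2 * d := by nlinarith [hrd, hn1, hr.le]
      have hmain := hratio (z k) r (2 * d) hr hr2 hdiam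
      have heq : r / (2 * d) = 1 / (4 * n) := by
        rw [hr_def]
        field_simp
        ring
      calc ENNReal.ofReal (C * (1 / (4 * n)) ^ θ) * μ (ball a d)
          ≤ ENNReal.ofReal (C * (r / (2 * d)) ^ θ) * μ (ball (z k) (2 * d)) := by
            rw [heq]; exact mul_le_mul_right (measure_mono hsub2) _
        _ ≤ μ (ball (z k) r) := hmain
    set c : ℝ≥0∞ := ENNReal.ofReal (C * (1 / (4 * n)) ^ θ) with hc_def
    have hsum : (n : ℝ≥0∞) * (c * μ (ball a d)) ≤ μ (ball a d) := by
      calc (n : ℝ≥0∞) * (c * μ (ball a d))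
          = ∑ _k : Fin n, (c * μ (ball a d)) := by
            rw [Finset.sum_const, Finset.card_univ, Fintype.card_fin, nsmul_eq_mul]
        _ ≤ ∑ k : Fin n, μ (ball (z k) r) := Finset.sum_le_sum fun k _ => hball k
        _ = μ (⋃ k, ball (z k) r) := by
            rw [measure_iUnion hdisj fun k => measurableSet_ball, tsum_fintype]
        _ ≤ μ (ball a d) := measure_mono hsub
    have hμ0 : μ (ball a d) ≠ 0 := (hpos a d hd).ne'
    have hμt : μ (ball a d) ≠ ⊤ := (hfin a d).ne
    have h1 : (n : ℝ≥0∞) * c ≤ 1 := by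
      rw [← mul_assoc] at hsum
      exact (ENNReal.mul_le_mul_iff_left hμ0 hμt).mp (by rwa [one_mul])
    have hnn : (0:ℝ) ≤ C * (1 / (4 * n)) ^ θ := by positivity
    rw [hc_def, ← ENNReal.ofReal_natCast n, ← ENNReal.ofReal_mul (Nat.cast_nonneg n)] at h1
    exact ENNReal.ofReal_le_one.mp h1
  have htend : Filter.Tendsto (fun n : ℕ => (n:ℝ) ^ (1 - θ)) Filter.atTop Filter.atTop :=
    (tendsto_rpow_atTop (by linarith)).comp tendsto_natCast_atTop_atTop
  obtain ⟨n, hn1, hn2⟩ :=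
    ((htend.eventually_gt_atTop ((4:ℝ) ^ θ / C)).and (Filter.eventually_gt_atTop 0)).exists
  have hn' : (0:ℝ) < n := Nat.cast_pos.mpr hn2
  have hk := key n hn2
  have h4 : (0:ℝ) < (4:ℝ) ^ θ := Real.rpow_pos_of_pos (by norm_num) θ
  have heq : (n:ℝ) * (C * (1 / (4 * n)) ^ θ) = C * (n:ℝ) ^ (1 - θ) / (4:ℝ) ^ θ := by
    rw [Real.rpow_sub hn', Real.rpow_one, one_div,
      Real.inv_rpow (by positivity), Real.mul_rpow (by norm_num) hn'.le]
    have hnθ : (0:ℝ) < (n:ℝ) ^ θ := Real.rpow_pos_of_pos hn' θ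
    field_simp
  have hgt : 1 < C * (n:ℝ) ^ (1 - θ) / (4:ℝ) ^ θ := by
    rw [lt_div_iff₀ h4, one_mul]
    have := (div_lt_iff₀ hC).mp hn1
    linarith
  rw [heq] at hk
  linarith
end

section
/- Let (X,d) be a metric space and μ a Borel measure on X that is positive and finite on every open ball; fix x₀ ∈ X and write B_ρ := B(x₀,ρ). Let 1 < q < q' and R₀ > 0, and assume there is a constant C ≥ 1 such that μ(B_ρ)/μ(B_σ) ≤ C·(ρ/σ)^{q'} for all 0 < ρ < σ ≤ R₀. Then there exists a constant C' > 0, depending only on q, q' and C, such that for all 0 < r < R ≤ R₀ one has ∫_r^R (ρ/μ(B_ρ))^{1/(q−1)} dρ ≤ C' · ( r^q / μ(B_r) )^{1/(q−1)}; equivalently, ( ∫_r^R (ρ/μ(B_ρ))^{1/(q−1)} dρ )^{1−q} ≥ (C')^{1−q} · μ(B_r)/r^q. -/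
/-!
For `r < ρ` the lower-exponent bound gives `ρ / μ(B_ρ) ≤ C (r/ρ)^{q'} ρ / μ(B_r)`, so with
`s = (q' - q)/(q - 1) > 0` the integrand is at most
`C^{1/(q-1)} (r^q / μ(B_r))^{1/(q-1)} · r^s ρ^{-(s+1)}`. The scale-invariant tail
`∫_r^∞ r^s ρ^{-(s+1)} dρ = 1/s` then yields `C' = C^{1/(q-1)} / s`. The second inequality is the
first raised to the negative power `1 - q`.
-/

open MeasureTheory Metric Set
open scoped ENNReal

theorem ENNReal.div_le_mul_div_of_le_mul {a b c x : ℝ≥0∞} (hc₀ : c ≠ 0) (hc : c ≠ ∞)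
    (h : a ≤ c * b) : x / b ≤ c * x / a :=
  calc x / b = c * x / (c * b) := (ENNReal.mul_div_mul_left _ _ hc₀ hc).symm
    _ ≤ c * x / a := ENNReal.div_le_div_left h _

theorem ENNReal.mul_rpow_neg_le_rpow_neg_of_le_mul_rpow {I c A : ℝ≥0∞} {p : ℝ} (hp : 0 < p)
    (hc₀ : c ≠ 0) (hc : c ≠ ∞) (h : I ≤ c * A ^ (1 / p)) : c ^ (-p) * A⁻¹ ≤ I ^ (-p) := by
  have hIp : I ^ p ≤ c ^ p * A := calc
    I ^ p ≤ (c * A ^ (1 / p)) ^ p := ENNReal.rpow_le_rpow h hp.le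
    _ = c ^ p * A := by
      rw [ENNReal.mul_rpow_of_nonneg _ _ hp.le, ← ENNReal.rpow_mul, one_div_mul_cancel hp.ne',
        ENNReal.rpow_one]
  rw [ENNReal.rpow_neg, ENNReal.rpow_neg,
    ← ENNReal.mul_inv (Or.inl (ENNReal.rpow_pos (pos_iff_ne_zero.2 hc₀) hc).ne')
      (Or.inl (ENNReal.rpow_ne_top_of_nonneg hp.le hc))]
  exact ENNReal.inv_le_inv.2 hIp

theorem lintegral_Ioi_ofReal_rpow_of_lt {a c : ℝ} (ha : a < -1) (hc : 0 < c) :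
    ∫⁻ t in Ioi c, ENNReal.ofReal (t ^ a) = ENNReal.ofReal (-c ^ (a + 1) / (a + 1)) := by
  rw [← integral_Ioi_rpow_of_lt ha hc,
    ofReal_integral_eq_lintegral_ofReal (integrableOn_Ioi_rpow_of_lt ha hc)]
  filter_upwards [ae_restrict_mem measurableSet_Ioi] with t ht using
    Real.rpow_nonneg (hc.trans ht).le a

theorem lintegral_Ioi_ofReal_mul_rpow_neg_sub_one {s c : ℝ} (hs : 0 < s) (hc : 0 < c) :
    ∫⁻ t in Ioi c, ENNReal.ofReal (c ^ s * t ^ (-(s + 1))) = ENNReal.ofReal s⁻¹ := by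
  simp_rw [ENNReal.ofReal_mul (Real.rpow_nonneg hc.le s)]
  rw [lintegral_const_mul _ (by fun_prop), lintegral_Ioi_ofReal_rpow_of_lt (by linarith) hc,
    ← ENNReal.ofReal_mul (Real.rpow_nonneg hc.le s)]
  congr 1
  rw [show -(s + 1) + 1 = -s by ring, Real.rpow_neg hc.le]
  field_simp

theorem rpow_ofReal_div_le_of_le_mul {a b : ℝ≥0∞} {C q q' r ρ : ℝ} (hC : 0 < C) (hq : 1 < q)
    (hr : 0 < r) (hρ : 0 < ρ) (h : a ≤ ENNReal.ofReal (C * (r / ρ) ^ q') * b) :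
    (ENNReal.ofReal ρ / b) ^ (1 / (q - 1)) ≤
      ENNReal.ofReal (C ^ (1 / (q - 1)) *
          (r ^ ((q' - q) / (q - 1)) * ρ ^ (-((q' - q) / (q - 1) + 1)))) *
        (ENNReal.ofReal (r ^ q) / a) ^ (1 / (q - 1)) := by
  have hq₁ : 0 < q - 1 := by linarith
  have hα : 0 ≤ 1 / (q - 1) := by positivity
  have hexp : (1 - q') * (1 / (q - 1)) = -((q' - q) / (q - 1) + 1) := by
    field_simp
    ring
  have hratio : ENNReal.ofReal ρ / b ≤
      ENNReal.ofReal (C * (r ^ (q' - q) * ρ ^ (1 - q'))) * (ENNReal.ofReal (r ^ q) / a) := calc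
    ENNReal.ofReal ρ / b ≤ ENNReal.ofReal (C * (r / ρ) ^ q') * ENNReal.ofReal ρ / a :=
      ENNReal.div_le_mul_div_of_le_mul (ENNReal.ofReal_pos.2 (by positivity)).ne'
        ENNReal.ofReal_ne_top h
    _ = _ := by
      rw [← mul_div_assoc, ← ENNReal.ofReal_mul (by positivity),
        ← ENNReal.ofReal_mul (by positivity)]
      congr 2
      rw [Real.div_rpow hr.le hρ.le, Real.rpow_sub hr, Real.rpow_sub hρ, Real.rpow_one]
      field_simp
  refine (ENNReal.rpow_le_rpow hratio hα).trans_eq ?_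
  rw [ENNReal.mul_rpow_of_nonneg _ _ hα, ENNReal.ofReal_rpow_of_nonneg (by positivity) hα,
    Real.mul_rpow hC.le (by positivity), Real.mul_rpow (by positivity) (by positivity),
    ← Real.rpow_mul hr.le, ← Real.rpow_mul hρ.le, mul_one_div, hexp]

theorem setLIntegral_rpow_ofReal_div_le {m : ℝ → ℝ≥0∞} {C q q' r R : ℝ} (hC : 0 < C)
    (hq : 1 < q) (hqq' : q < q') (hr : 0 < r)
    (hm : ∀ ρ ∈ Ioc r R, m r ≤ ENNReal.ofReal (C * (r / ρ) ^ q') * m ρ) :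
    ∫⁻ ρ in Ioc r R, (ENNReal.ofReal ρ / m ρ) ^ (1 / (q - 1)) ≤
      ENNReal.ofReal (C ^ (1 / (q - 1)) / ((q' - q) / (q - 1))) *
        (ENNReal.ofReal (r ^ q) / m r) ^ (1 / (q - 1)) := by
  set s := (q' - q) / (q - 1)
  have hs : 0 < s := div_pos (by linarith) (by linarith)
  set D := (ENNReal.ofReal (r ^ q) / m r) ^ (1 / (q - 1))
  calc ∫⁻ ρ in Ioc r R, (ENNReal.ofReal ρ / m ρ) ^ (1 / (q - 1))
      ≤ ∫⁻ ρ in Ioc r R, ENNReal.ofReal (C ^ (1 / (q - 1))) *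
          ENNReal.ofReal (r ^ s * ρ ^ (-(s + 1))) * D := by
        refine setLIntegral_mono' measurableSet_Ioc fun ρ hρ => ?_
        rw [← ENNReal.ofReal_mul (by positivity)]
        exact rpow_ofReal_div_le_of_le_mul hC hq hr (hr.trans hρ.1) (hm ρ hρ)
    _ ≤ ∫⁻ ρ in Ioi r, ENNReal.ofReal (C ^ (1 / (q - 1))) *
          ENNReal.ofReal (r ^ s * ρ ^ (-(s + 1))) * D :=
        lintegral_mono_set Ioc_subset_Ioi_self
    _ = ENNReal.ofReal (C ^ (1 / (q - 1)) / s) * D := by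
      rw [lintegral_mul_const _ (by fun_prop), lintegral_const_mul _ (by fun_prop),
        lintegral_Ioi_ofReal_mul_rpow_neg_sub_one hs hr, ← ENNReal.ofReal_mul (by positivity),
        ← div_eq_mul_inv]

/-- **Integral estimate from the proof of Corollary 4.5(b).** If
`μ(B_ρ)/μ(B_σ) ≤ C (ρ/σ)^{q'}` for `0 < ρ < σ ≤ R₀`, with `1 < q < q'`, then
there is `C' > 0` depending only on `q, q', C` with
`∫_r^R (ρ/μ(B_ρ))^{1/(q−1)} dρ ≤ C' (r^q/μ(B_r))^{1/(q−1)}` for all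
`0 < r < R ≤ R₀`; equivalently
`(∫_r^R (ρ/μ(B_ρ))^{1/(q−1)} dρ)^{1−q} ≥ (C')^{1−q} μ(B_r)/r^q`. -/
theorem integral_estimate_below_lower_exponent
    (q q' C : ℝ) (hq : 1 < q) (hqq' : q < q') (hC : 1 ≤ C) :
    ∃ C' : ℝ, 0 < C' ∧
      ∀ (X : Type) [MetricSpace X] [MeasurableSpace X] [BorelSpace X]
        (μ : Measure X) (x₀ : X) (R₀ : ℝ), 0 < R₀ →
        (∀ r : ℝ, 0 < r → 0 < μ (ball x₀ r)) →
        (∀ r : ℝ, μ (ball x₀ r) < ⊤) →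
        (∀ ρ σ : ℝ, 0 < ρ → ρ < σ → σ ≤ R₀ →
          μ (ball x₀ ρ) ≤ ENNReal.ofReal (C * (ρ / σ) ^ q') * μ (ball x₀ σ)) →
        ∀ r R : ℝ, 0 < r → r < R → R ≤ R₀ →
          (∫⁻ ρ in Set.Ioc r R, (ENNReal.ofReal ρ / μ (ball x₀ ρ)) ^ (1 / (q - 1)))
              ≤ ENNReal.ofReal C' *
                  (ENNReal.ofReal (r ^ q) / μ (ball x₀ r)) ^ (1 / (q - 1)) ∧
            ENNReal.ofReal C' ^ (1 - q) * (μ (ball x₀ r) / ENNReal.ofReal (r ^ q))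
              ≤ (∫⁻ ρ in Set.Ioc r R,
                  (ENNReal.ofReal ρ / μ (ball x₀ ρ)) ^ (1 / (q - 1))) ^ (1 - q) := by
  have hC₀ : 0 < C := one_pos.trans_le hC
  have hC' : 0 < C ^ (1 / (q - 1)) / ((q' - q) / (q - 1)) :=
    div_pos (by positivity) (div_pos (by linarith) (by linarith))
  refine ⟨_, hC', fun X _ _ _ μ x₀ R₀ _ _ _ hμ r R hr _ hRR₀ => ?_⟩
  have hI := setLIntegral_rpow_ofReal_div_le (m := fun ρ => μ (ball x₀ ρ)) hC₀ hq hqq' hr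
    fun ρ hρ => hμ r ρ hr hρ.1 (hρ.2.trans hRR₀)
  refine ⟨hI, ?_⟩
  have hpow := ENNReal.mul_rpow_neg_le_rpow_neg_of_le_mul_rpow (by linarith)
    (ENNReal.ofReal_pos.2 hC').ne' ENNReal.ofReal_ne_top hI
  rwa [neg_sub, ENNReal.inv_div (Or.inr ENNReal.ofReal_ne_top)
    (Or.inr (ENNReal.ofReal_pos.2 (by positivity)).ne')] at hpow
end

section
/- Let (X,d) be a metric space and μ a Borel measure on X that is positive and finite on every open ball; fix x₀ ∈ X and write B_ρ := B(x₀,ρ). Let 1 < p < s̄, let R₁ > 0, and assume there is C₁ > 0 such that μ(B_ρ) ≥ C₁·ρ^{s̄} for all 0 < ρ ≤ R₁. Then for all 0 < r < R₁ one has ∫_r^{R₁} (ρ/μ(B_ρ))^{1/(p−1)} dρ ≤ C₁^{−p/(s̄(p−1))} · μ(B_r)^{−(s̄−p)/(s̄(p−1))} · log(R₁/r). -/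
open MeasureTheory Metric
open scoped ENNReal

namespace ENNReal

lemma rpow_le_rpow_of_nonpos {x y : ℝ≥0∞} {z : ℝ} (hxy : x ≤ y) (hz : z ≤ 0) :
    y ^ z ≤ x ^ z := by
  rw [← neg_neg z, rpow_neg y, rpow_neg x]
  exact ENNReal.inv_le_inv.2 (rpow_le_rpow hxy (neg_nonneg.2 hz))

lemma rpow_add_of_nonpos (x : ℝ≥0∞) {y z : ℝ} (hy : y ≤ 0) (hz : z ≤ 0) :
    x ^ (y + z) = x ^ y * x ^ z := by
  have h := ENNReal.rpow_add_of_nonneg (x := x⁻¹) (-y) (-z) (neg_nonneg.2 hy) (neg_nonneg.2 hz)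
  simpa only [inv_rpow, ← rpow_neg, neg_add, neg_neg] using h

end ENNReal

lemma lintegral_ofReal_inv_Ioc {a b : ℝ} (ha : 0 < a) (hab : a ≤ b) :
    ∫⁻ x in Set.Ioc a b, ENNReal.ofReal x⁻¹ = ENNReal.ofReal (Real.log (b / a)) := by
  have hb : 0 < b := ha.trans_le hab
  have hint : IntegrableOn (fun x : ℝ => x⁻¹) (Set.Ioc a b) := by
    rw [← intervalIntegrable_iff_integrableOn_Ioc_of_le hab]
    exact intervalIntegral.intervalIntegrable_inv
      (fun x hx => ((lt_min ha hb).trans_le hx.1).ne') continuousOn_id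
  have hnonneg : 0 ≤ᵐ[volume.restrict (Set.Ioc a b)] fun x : ℝ => x⁻¹ := by
    filter_upwards [ae_restrict_mem measurableSet_Ioc] with x hx
    exact inv_nonneg.2 (ha.trans hx.1).le
  rw [← ofReal_integral_eq_lintegral_ofReal hint hnonneg, ← intervalIntegral.integral_of_le hab,
    integral_inv_of_pos ha hb]

/-- The exponent `1/(p-1)` splits as `p/(s(p-1)) + (s-p)/(s(p-1))`: the first part of `M^{-1/(p-1)}`
is paid for by the lower bound `C ρ^s ≤ M`, which turns `ρ^{1/(p-1)}` into `ρ⁻¹`, the second by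
`m ≤ M`. -/
lemma rpow_ofReal_div_le_of_lower_bounds {ρ C p s : ℝ} {m M : ℝ≥0∞}
    (hρ : 0 < ρ) (hC : 0 < C) (hp : 1 < p) (hps : p < s)
    (hmass : ENNReal.ofReal (C * ρ ^ s) ≤ M) (hmM : m ≤ M) :
    (ENNReal.ofReal ρ / M) ^ (1 / (p - 1))
      ≤ ENNReal.ofReal (C ^ (-(p / (s * (p - 1))))) * m ^ (-((s - p) / (s * (p - 1)))) *
          ENNReal.ofReal ρ⁻¹ := by
  have hp1 : 0 < p - 1 := by linarith
  have hs : 0 < s := by linarith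
  set a := p / (s * (p - 1))
  set b := (s - p) / (s * (p - 1))
  have ha : 0 ≤ a := by positivity
  have hb : 0 ≤ b := div_nonneg (by linarith) (by positivity)
  have hsplit : -(1 / (p - 1)) = -a + -b := by
    simp only [a, b]
    field_simp
    ring
  have hpow : ρ ^ (1 / (p - 1)) * (C * ρ ^ s) ^ (-a) = C ^ (-a) * ρ⁻¹ := by
    rw [Real.mul_rpow hC.le (by positivity), ← Real.rpow_mul hρ.le, mul_left_comm,
      ← Real.rpow_add hρ, ← Real.rpow_neg_one]
    congr 2
    simp only [a]
    field_simp
    ring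
  calc (ENNReal.ofReal ρ / M) ^ (1 / (p - 1))
      = ENNReal.ofReal ρ ^ (1 / (p - 1)) * (M ^ (-a) * M ^ (-b)) := by
        rw [ENNReal.div_rpow_of_nonneg _ _ (by positivity), div_eq_mul_inv, ← ENNReal.rpow_neg,
          hsplit, ENNReal.rpow_add_of_nonpos _ (neg_nonpos.2 ha) (neg_nonpos.2 hb)]
    _ ≤ ENNReal.ofReal ρ ^ (1 / (p - 1)) * (ENNReal.ofReal (C * ρ ^ s) ^ (-a) * m ^ (-b)) := by
        gcongr ENNReal.ofReal ρ ^ (1 / (p - 1)) * ?_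
        exact mul_le_mul' (ENNReal.rpow_le_rpow_of_nonpos hmass (neg_nonpos.2 ha))
          (ENNReal.rpow_le_rpow_of_nonpos hmM (neg_nonpos.2 hb))
    _ = ENNReal.ofReal (C ^ (-a)) * m ^ (-b) * ENNReal.ofReal ρ⁻¹ := by
        rw [ENNReal.ofReal_rpow_of_pos hρ, ENNReal.ofReal_rpow_of_pos (by positivity), ← mul_assoc,
          ← ENNReal.ofReal_mul (by positivity), hpow, ENNReal.ofReal_mul (by positivity)]
        ring

theorem integral_estimate_lower_mass_bound_general
    {X : Type*} [MetricSpace X] [MeasurableSpace X]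
    (μ : Measure X) (x₀ : X)
    (p s : ℝ) (hp : 1 < p) (hps : p < s)
    (R₁ C₁ : ℝ) (hC₁ : 0 < C₁)
    (hmass : ∀ ρ : ℝ, 0 < ρ → ρ ≤ R₁ → ENNReal.ofReal (C₁ * ρ ^ s) ≤ μ (ball x₀ ρ))
    (r : ℝ) (hr : 0 < r) (hrR : r < R₁) :
    (∫⁻ ρ in Set.Ioc r R₁, (ENNReal.ofReal ρ / μ (ball x₀ ρ)) ^ (1 / (p - 1)))
      ≤ ENNReal.ofReal (C₁ ^ (-(p / (s * (p - 1))))) *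
          (μ (ball x₀ r)) ^ (-((s - p) / (s * (p - 1)))) *
          ENNReal.ofReal (Real.log (R₁ / r)) := by
  set c := ENNReal.ofReal (C₁ ^ (-(p / (s * (p - 1))))) *
    (μ (ball x₀ r)) ^ (-((s - p) / (s * (p - 1))))
  have hpointwise : ∀ ρ ∈ Set.Ioc r R₁,
      (ENNReal.ofReal ρ / μ (ball x₀ ρ)) ^ (1 / (p - 1)) ≤ c * ENNReal.ofReal ρ⁻¹ :=
    fun ρ ⟨hrρ, hρR⟩ => rpow_ofReal_div_le_of_lower_bounds (hr.trans hrρ) hC₁ hp hps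
      (hmass ρ (hr.trans hrρ) hρR) (measure_mono (ball_subset_ball hrρ.le))
  calc (∫⁻ ρ in Set.Ioc r R₁, (ENNReal.ofReal ρ / μ (ball x₀ ρ)) ^ (1 / (p - 1)))
      ≤ ∫⁻ ρ in Set.Ioc r R₁, c * ENNReal.ofReal ρ⁻¹ :=
        setLIntegral_mono (by fun_prop) hpointwise
    _ = c * ENNReal.ofReal (Real.log (R₁ / r)) := by
        rw [lintegral_const_mul c (by fun_prop), lintegral_ofReal_inv_Ioc hr hrR.le]

/-- **Pointwise estimate from the proof of Theorem 6.1.** If `1 < p < s̄` and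
`μ(B_ρ) ≥ C₁ ρ^{s̄}` for `0 < ρ ≤ R₁`, then for all `0 < r < R₁`,
`∫_r^{R₁} (ρ/μ(B_ρ))^{1/(p−1)} dρ
  ≤ C₁^{−p/(s̄(p−1))} μ(B_r)^{−(s̄−p)/(s̄(p−1))} log(R₁/r)`. -/
theorem integral_estimate_lower_mass_bound
    {X : Type*} [MetricSpace X] [MeasurableSpace X] [BorelSpace X]
    (μ : Measure X) (x₀ : X)
    (hpos : ∀ r : ℝ, 0 < r → 0 < μ (ball x₀ r))
    (hfin : ∀ r : ℝ, μ (ball x₀ r) < ⊤)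
    (p s : ℝ) (hp : 1 < p) (hps : p < s)
    (R₁ C₁ : ℝ) (hR₁ : 0 < R₁) (hC₁ : 0 < C₁)
    (hmass : ∀ ρ : ℝ, 0 < ρ → ρ ≤ R₁ → ENNReal.ofReal (C₁ * ρ ^ s) ≤ μ (ball x₀ ρ))
    (r : ℝ) (hr : 0 < r) (hrR : r < R₁) :
    (∫⁻ ρ in Set.Ioc r R₁, (ENNReal.ofReal ρ / μ (ball x₀ ρ)) ^ (1 / (p - 1)))
      ≤ ENNReal.ofReal (C₁ ^ (-(p / (s * (p - 1))))) *
          (μ (ball x₀ r)) ^ (-((s - p) / (s * (p - 1)))) *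
          ENNReal.ofReal (Real.log (R₁ / r)) :=
  integral_estimate_lower_mass_bound_general μ x₀ p s hp hps R₁ C₁ hC₁ hmass r hr hrR
end

section
/- Let (X,d) be a metric space and μ a Borel measure on X that is positive and finite on every open ball; fix x₀ ∈ X and write B_ρ := B(x₀,ρ). Let 1 < p < s̄ and let 0 < τ < s̄(p−1)/(s̄−p). Let 0 < R₁ ≤ 1 and assume there are constants C₁, C₂ > 0 and an exponent ℓ > 0 such that C₁·ρ^{s̄} ≤ μ(B_ρ) ≤ C₂·ρ^{ℓ} for all 0 < ρ ≤ R₁. Then the function x ↦ ( ∫_{d(x,x₀)}^{R₁} (ρ/μ(B_ρ))^{1/(p−1)} dρ )^{τ} is μ-integrable over the ball B(x₀,R₁), i.e. ∫_{B(x₀,R₁)} ( ∫_{d(x,x₀)}^{R₁} (ρ/μ(B_ρ))^{1/(p−1)} dρ )^{τ} dμ(x) < ∞. -/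
/-!
Let `G(r) = ∫_r^{R₁} (ρ/μ(B_ρ))^q dρ` with `q = 1/(p-1)` and choose `τ < κ < s(p-1)/(s-p)`.
Since `B̄_r ⊆ B_ρ` for `ρ > r`, we get `μ(B̄_r)^{1/κ} G(r) ≤ A := ∫_0^{R₁} ρ^q μ(B_ρ)^{1/κ-q} dρ`,
and `A < ∞` by the lower bound `μ(B_ρ) ≥ C₁ ρ^s` precisely because `κ` is below the critical
exponent. Thus `G(d(x,x₀)) > t` forces `μ(B̄(x₀, d(x,x₀))) ≤ (A/t)^κ`, and for any measure the
points `x` with `μ(B̄(x₀, d(x,x₀))) ≤ u` form a set of measure at most `u`. So `G(d(·,x₀))` is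
in weak `L^κ` of the finite measure `μ` restricted to `B(x₀,R₁)`, hence in `L^τ`.
-/

open MeasureTheory Metric Set Filter Topology
open scoped ENNReal

theorem ENNReal.rpow_le_rpow_of_nonpos_s8 {x y : ℝ≥0∞} {z : ℝ} (hxy : x ≤ y) (hz : z ≤ 0) :
    y ^ z ≤ x ^ z := by
  have h := ENNReal.inv_le_inv.2 (ENNReal.rpow_le_rpow hxy (neg_nonneg.2 hz))
  rwa [← ENNReal.rpow_neg, ← ENNReal.rpow_neg, neg_neg] at h

theorem ENNReal.rpow_mul_div_rpow_le (m x : ℝ≥0∞) {a q : ℝ} (ha : 0 < a) (hq : 0 < q) :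
    m ^ a * (x / m) ^ q ≤ x ^ q * m ^ (a - q) := by
  rcases eq_or_ne m 0 with rfl | hm0
  · simp [ENNReal.zero_rpow_of_pos ha]
  rcases eq_or_ne m ⊤ with rfl | hmt
  · simp [ENNReal.zero_rpow_of_pos hq]
  rw [ENNReal.div_rpow_of_nonneg _ _ hq.le, ENNReal.rpow_sub _ _ hm0 hmt, div_eq_mul_inv,
    div_eq_mul_inv, mul_left_comm]

theorem setLIntegral_lt_top_of_le_const_mul {α : Type*} [MeasurableSpace α] {μ : Measure α}
    {s : Set α} (hs : MeasurableSet s) {F : α → ℝ≥0∞} {c : ℝ≥0∞} (hc : c ≠ ⊤) {g : α → ℝ}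
    (hg : IntegrableOn g s μ) (hF : ∀ t ∈ s, F t ≤ c * ENNReal.ofReal (g t)) :
    ∫⁻ t in s, F t ∂μ < ⊤ := by
  refine (setLIntegral_mono' hs hF).trans_lt ?_
  rw [lintegral_const_mul' _ _ hc]
  exact ENNReal.mul_lt_top hc.lt_top hg.setLIntegral_lt_top

section WeakType

variable {α : Type*} [MeasurableSpace α] {ν : Measure α} {f : α → ℝ≥0∞} {C : ℝ≥0∞} {κ τ : ℝ}

theorem ae_ne_top_of_meas_lt_le (hC : C ≠ ⊤) (hκ : 0 < κ)
    (hweak : ∀ t : ℝ, 0 < t → ν {x | ENNReal.ofReal t < f x} ≤ (C / ENNReal.ofReal t) ^ κ) :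
    ∀ᵐ x ∂ν, f x ≠ ⊤ := by
  have hlim : Tendsto (fun t : ℝ => (C / ENNReal.ofReal t) ^ κ) atTop (𝓝 0) := by
    have h := ((ENNReal.continuous_rpow_const (y := κ)).tendsto _).comp
      (ENNReal.Tendsto.const_div ENNReal.tendsto_ofReal_atTop (Or.inr hC))
    simpa [Function.comp_def, ENNReal.zero_rpow_of_pos hκ] using h
  refine ae_iff.2 (le_antisymm (ge_of_tendsto hlim ?_) zero_le)
  filter_upwards [eventually_gt_atTop 0] with t ht
  refine (measure_mono fun x hx => ?_).trans (hweak t ht)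
  simp_all

theorem lintegral_rpow_lt_top_of_meas_lt_le [IsFiniteMeasure ν] (hf : AEMeasurable f ν)
    (hC : C ≠ ⊤) (hτ : 0 < τ) (hτκ : τ < κ)
    (hweak : ∀ t : ℝ, 0 < t → ν {x | ENNReal.ofReal t < f x} ≤ (C / ENNReal.ofReal t) ^ κ) :
    ∫⁻ x, f x ^ τ ∂ν < ⊤ := by
  have hκ : 0 < κ := hτ.trans hτκ
  have htoReal : ∫⁻ x, f x ^ τ ∂ν = ∫⁻ x, ENNReal.ofReal ((f x).toReal ^ τ) ∂ν := by
    refine lintegral_congr_ae ?_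
    filter_upwards [ae_ne_top_of_meas_lt_le hC hκ hweak] with x hx
    rw [← ENNReal.ofReal_rpow_of_nonneg ENNReal.toReal_nonneg hτ.le, ENNReal.ofReal_toReal hx]
  have htail : ∀ t : ℝ, 0 < t → ν {x | t < (f x).toReal} ≤ (C / ENNReal.ofReal t) ^ κ :=
    fun t ht => (measure_mono fun x hx =>
      ((ENNReal.ofReal_lt_ofReal_iff_of_nonneg ht.le).2 hx).trans_le ENNReal.ofReal_toReal_le).trans
      (hweak t ht)
  rw [htoReal, lintegral_rpow_eq_lintegral_meas_lt_mul ν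
    (ae_of_all _ fun x => ENNReal.toReal_nonneg) hf.ennreal_toReal hτ,
    ← Ioc_union_Ioi_eq_Ioi zero_le_one, lintegral_union measurableSet_Ioi Ioc_disjoint_Ioi_same]
  refine ENNReal.mul_lt_top ENNReal.ofReal_lt_top (ENNReal.add_lt_top.2 ⟨?_, ?_⟩)
  · refine setLIntegral_lt_top_of_le_const_mul measurableSet_Ioc (measure_ne_top ν univ)
      (intervalIntegral.intervalIntegrable_rpow' (by linarith) (a := 0) (b := 1)).1
      fun t _ => mul_le_mul_left (measure_mono (subset_univ _)) _
  · refine setLIntegral_lt_top_of_le_const_mul measurableSet_Ioi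
      (ENNReal.rpow_ne_top_of_nonneg hκ.le hC) (integrableOn_Ioi_rpow_of_lt
        (by linarith : τ - 1 - κ < -1) one_pos) fun t ht => ?_
    have ht0 : (0 : ℝ) < t := one_pos.trans ht
    calc ν {x | t < (f x).toReal} * ENNReal.ofReal (t ^ (τ - 1))
        ≤ (C / ENNReal.ofReal t) ^ κ * ENNReal.ofReal (t ^ (τ - 1)) :=
          mul_le_mul_left (htail t ht0) _
      _ = C ^ κ * ENNReal.ofReal (t ^ (τ - 1 - κ)) := by
          rw [ENNReal.div_rpow_of_nonneg _ _ hκ.le, ENNReal.ofReal_rpow_of_pos ht0, div_eq_mul_inv,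
            mul_assoc, ← ENNReal.ofReal_inv_of_pos (by positivity), ← ENNReal.ofReal_mul
            (by positivity), ← Real.rpow_neg ht0.le, ← Real.rpow_add ht0]
          ring_nf

end WeakType

section Radial

variable {X : Type*} [PseudoMetricSpace X] [MeasurableSpace X] (μ : Measure X) (x₀ : X)

theorem measure_setOf_measure_closedBall_dist_le (u : ℝ≥0∞) :
    μ {x | μ (closedBall x₀ (dist x x₀)) ≤ u} ≤ u := by
  set T : Set ℝ := {r | μ (closedBall x₀ r) ≤ u}
  have hT : IsLowerSet T := fun a b hba ha =>
    (measure_mono (closedBall_subset_closedBall hba)).trans ha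
  have := hT.ordConnected
  have hmono : Monotone fun r : T => closedBall x₀ (r : ℝ) :=
    fun a b hab => closedBall_subset_closedBall hab
  calc μ {x | μ (closedBall x₀ (dist x x₀)) ≤ u}
      ≤ μ (⋃ r : T, closedBall x₀ (r : ℝ)) :=
        measure_mono fun x hx => mem_iUnion.2 ⟨⟨dist x x₀, hx⟩, mem_closedBall.2 le_rfl⟩
    _ = ⨆ r : T, μ (closedBall x₀ (r : ℝ)) := hmono.measure_iUnion
    _ ≤ u := iSup_le fun r => r.2

/-- For `q = 1/(p-1)` this is comparable to the `p`-harmonic Green function with pole `x₀`,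
evaluated at distance `r` from `x₀`. -/
noncomputable def greenProfile (q R r : ℝ) : ℝ≥0∞ :=
  ∫⁻ ρ in Ioc r R, (ENNReal.ofReal ρ / μ (ball x₀ ρ)) ^ q

theorem greenProfile_antitone (q R : ℝ) : Antitone (greenProfile μ x₀ q R) :=
  fun _ _ hrr' => lintegral_mono_set (Ioc_subset_Ioc_left hrr')

theorem measure_closedBall_rpow_mul_greenProfile_le {a q R r : ℝ} (ha : 0 < a) (hq : 0 < q)
    (hr : 0 ≤ r) :
    μ (closedBall x₀ r) ^ a * greenProfile μ x₀ q R r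
      ≤ ∫⁻ ρ in Ioc 0 R, ENNReal.ofReal ρ ^ q * μ (ball x₀ ρ) ^ (a - q) := by
  refine (lintegral_const_mul_le _ _).trans ?_
  refine (setLIntegral_mono' measurableSet_Ioc fun ρ hρ => ?_).trans
    (lintegral_mono_set (Ioc_subset_Ioc_left hr))
  calc μ (closedBall x₀ r) ^ a * (ENNReal.ofReal ρ / μ (ball x₀ ρ)) ^ q
      ≤ μ (ball x₀ ρ) ^ a * (ENNReal.ofReal ρ / μ (ball x₀ ρ)) ^ q := by
        gcongr
        exact closedBall_subset_ball hρ.1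
    _ ≤ ENNReal.ofReal ρ ^ q * μ (ball x₀ ρ) ^ (a - q) :=
        ENNReal.rpow_mul_div_rpow_le _ _ ha hq

theorem measure_setOf_lt_greenProfile_le {ν : Measure X} (hνμ : ν ≤ μ) {κ q R t : ℝ}
    (hκ : 0 < κ) (hq : 0 < q) (ht : 0 < t) :
    ν {x | ENNReal.ofReal t < greenProfile μ x₀ q R (dist x x₀)}
      ≤ ((∫⁻ ρ in Ioc 0 R, ENNReal.ofReal ρ ^ q * μ (ball x₀ ρ) ^ (κ⁻¹ - q))
          / ENNReal.ofReal t) ^ κ := by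
  refine (measure_mono fun x hx => ?_).trans (measure_setOf_measure_closedBall_dist_le ν x₀ _)
  have hball : μ (closedBall x₀ (dist x x₀)) ^ κ⁻¹ * ENNReal.ofReal t
      ≤ ∫⁻ ρ in Ioc 0 R, ENNReal.ofReal ρ ^ q * μ (ball x₀ ρ) ^ (κ⁻¹ - q) :=
    (mul_le_mul_right hx.le _).trans
      (measure_closedBall_rpow_mul_greenProfile_le μ x₀ (inv_pos.2 hκ) hq dist_nonneg)
  rw [← ENNReal.le_div_iff_mul_le (Or.inl (ENNReal.ofReal_pos.2 ht).ne')
    (Or.inl ENNReal.ofReal_ne_top), ENNReal.rpow_inv_le_iff hκ] at hball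
  exact (Measure.le_iff'.1 hνμ _).trans hball

theorem lintegral_rpow_mul_measure_ball_rpow_lt_top {q e s C R : ℝ} (hq : 0 ≤ q) (hC : 0 < C)
    (hqse : -1 < q + s * e) (hR : μ (ball x₀ R) ≠ ⊤)
    (hlow : ∀ ρ, 0 < ρ → ρ ≤ R → ENNReal.ofReal (C * ρ ^ s) ≤ μ (ball x₀ ρ)) :
    ∫⁻ ρ in Ioc 0 R, ENNReal.ofReal ρ ^ q * μ (ball x₀ ρ) ^ e < ⊤ := by
  rcases le_or_gt 0 e with he | he
  · refine setLIntegral_lt_top_of_le_const_mul (c := ENNReal.ofReal R ^ q * μ (ball x₀ R) ^ e)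
      (g := fun _ => 1) measurableSet_Ioc (ENNReal.mul_ne_top
        (ENNReal.rpow_ne_top_of_nonneg hq ENNReal.ofReal_ne_top)
        (ENNReal.rpow_ne_top_of_nonneg he hR)) (integrableOn_const (by simp)) fun ρ hρ => ?_
    rw [ENNReal.ofReal_one, mul_one]
    gcongr <;> exact hρ.2
  · refine setLIntegral_lt_top_of_le_const_mul (c := ENNReal.ofReal (C ^ e)) measurableSet_Ioc
      ENNReal.ofReal_ne_top (intervalIntegral.intervalIntegrable_rpow' hqse (a := 0) (b := R)).1
      fun ρ hρ => ?_
    have hρ0 : 0 < ρ := hρ.1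
    calc ENNReal.ofReal ρ ^ q * μ (ball x₀ ρ) ^ e
        ≤ ENNReal.ofReal ρ ^ q * ENNReal.ofReal (C * ρ ^ s) ^ e := by
          gcongr ENNReal.ofReal ρ ^ q * ?_
          exact ENNReal.rpow_le_rpow_of_nonpos_s8 (hlow ρ hρ0 hρ.2) he.le
      _ = ENNReal.ofReal (C ^ e) * ENNReal.ofReal (ρ ^ (q + s * e)) := by
          rw [ENNReal.ofReal_rpow_of_pos hρ0, ENNReal.ofReal_rpow_of_pos (by positivity),
            ← ENNReal.ofReal_mul (by positivity), ← ENNReal.ofReal_mul (by positivity),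
            Real.mul_rpow hC.le (by positivity), ← Real.rpow_mul hρ0.le, Real.rpow_add hρ0]
          ring_nf

end Radial

-- Here the critical exponent `s(p-1)/(s-p)` enters: it makes `ρ^q μ(B_ρ)^(1/κ-q)` integrable at 0.
theorem neg_one_lt_add_mul_inv_sub {p s κ : ℝ} (hp : 1 < p) (hps : p < s) (hκ : 0 < κ)
    (hκs : κ < s * (p - 1) / (s - p)) :
    -1 < 1 / (p - 1) + s * (κ⁻¹ - 1 / (p - 1)) := by
  have hp1 : 0 < p - 1 := by linarith
  rw [lt_div_iff₀ (by linarith)] at hκs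
  have hsum : 1 / (p - 1) + s * (κ⁻¹ - 1 / (p - 1)) + 1
      = (s * (p - 1) - κ * (s - p)) / (κ * (p - 1)) := by
    field_simp
    ring
  have hpos : 0 < (s * (p - 1) - κ * (s - p)) / (κ * (p - 1)) :=
    div_pos (by linarith) (by positivity)
  linarith

theorem green_integrable_below_critical_exponent_general
    {X : Type*} [MetricSpace X] [MeasurableSpace X] [BorelSpace X]
    (μ : Measure X) (x₀ : X)
    (hfin : ∀ r : ℝ, μ (ball x₀ r) < ⊤)
    (p s τ : ℝ) (hp : 1 < p) (hps : p < s)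
    (hτ : 0 < τ) (hτ' : τ < s * (p - 1) / (s - p))
    (R₁ : ℝ)
    (C₁ : ℝ) (hC₁ : 0 < C₁)
    (hlow : ∀ ρ : ℝ, 0 < ρ → ρ ≤ R₁ → ENNReal.ofReal (C₁ * ρ ^ s) ≤ μ (ball x₀ ρ)) :
    (∫⁻ x in ball x₀ R₁,
        (∫⁻ ρ in Set.Ioc (dist x x₀) R₁,
          (ENNReal.ofReal ρ / μ (ball x₀ ρ)) ^ (1 / (p - 1))) ^ τ ∂μ) < ⊤ := by
  obtain ⟨κ, hτκ, hκs⟩ := exists_between hτ'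
  have hκ : 0 < κ := hτ.trans hτκ
  have hq : 0 < 1 / (p - 1) := one_div_pos.2 (by linarith)
  have hA := lintegral_rpow_mul_measure_ball_rpow_lt_top μ x₀ hq.le hC₁
    (neg_one_lt_add_mul_inv_sub hp hps hκ hκs) (hfin R₁).ne hlow
  have := isFiniteMeasure_restrict.2 (hfin R₁).ne
  have hmeas : Measurable fun x => greenProfile μ x₀ (1 / (p - 1)) R₁ (dist x x₀) :=
    (greenProfile_antitone μ x₀ _ _).measurable.comp
      (continuous_id.dist continuous_const).measurable
  exact lintegral_rpow_lt_top_of_meas_lt_le hmeas.aemeasurable hA.ne hτ hτκ fun t ht =>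
    measure_setOf_lt_greenProfile_le μ x₀ Measure.restrict_le_self hκ hq ht

/-- **Measure-theoretic core of Theorem 6.1 (subcritical integrability).** If
`1 < p < s̄`, `0 < τ < s̄(p−1)/(s̄−p)`, `0 < R₁ ≤ 1` and
`C₁ ρ^{s̄} ≤ μ(B_ρ) ≤ C₂ ρ^{ℓ}` for `0 < ρ ≤ R₁`, then
`x ↦ (∫_{d(x,x₀)}^{R₁} (ρ/μ(B_ρ))^{1/(p−1)} dρ)^τ`
is `μ`-integrable over `B(x₀,R₁)`. -/
theorem green_integrable_below_critical_exponent
    {X : Type*} [MetricSpace X] [MeasurableSpace X] [BorelSpace X]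
    (μ : Measure X) (x₀ : X)
    (hpos : ∀ r : ℝ, 0 < r → 0 < μ (ball x₀ r))
    (hfin : ∀ r : ℝ, μ (ball x₀ r) < ⊤)
    (p s τ : ℝ) (hp : 1 < p) (hps : p < s)
    (hτ : 0 < τ) (hτ' : τ < s * (p - 1) / (s - p))
    (R₁ : ℝ) (hR₁ : 0 < R₁) (hR₁' : R₁ ≤ 1)
    (C₁ C₂ ℓ : ℝ) (hC₁ : 0 < C₁) (hC₂ : 0 < C₂) (hℓ : 0 < ℓ)
    (hlow : ∀ ρ : ℝ, 0 < ρ → ρ ≤ R₁ → ENNReal.ofReal (C₁ * ρ ^ s) ≤ μ (ball x₀ ρ))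
    (hup : ∀ ρ : ℝ, 0 < ρ → ρ ≤ R₁ → μ (ball x₀ ρ) ≤ ENNReal.ofReal (C₂ * ρ ^ ℓ)) :
    (∫⁻ x in ball x₀ R₁,
        (∫⁻ ρ in Set.Ioc (dist x x₀) R₁,
          (ENNReal.ofReal ρ / μ (ball x₀ ρ)) ^ (1 / (p - 1))) ^ τ ∂μ) < ⊤ :=
  green_integrable_below_critical_exponent_general μ x₀ hfin p s τ hp hps hτ hτ' R₁ C₁ hC₁ hlow
end

section
/- Let (X,d) be a metric space and μ a Borel measure on X that is positive and finite on every open ball; fix x₀ ∈ X and write B_ρ := B(x₀,ρ). Assume both that μ is doubling at x₀ for radii up to R₀, i.e. there is C_d ≥ 1 with μ(B_{2ρ}) ≤ C_d·μ(B_ρ) for all 0 < ρ ≤ R₀, and that μ is reverse-doubling at x₀ with factor 2 for radii up to R₀, i.e. there is c > 1 with μ(B_{2ρ}) ≥ c·μ(B_ρ) for all 0 < ρ ≤ R₀. Let 1 < p < s and let τ ≥ s(p−1)/(s−p). Suppose there exist C > 0 and a sequence r_j → 0 of positive radii such that μ(B_{r_j}) ≤ C·r_j^{s} for all j. Then ∫_{B(x₀,R₀)}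 ( d(x,x₀)^p / μ(B_{d(x,x₀)}) )^{τ/(p−1)} dμ(x) = ∞. -/
open MeasureTheory Metric Filter
open scoped ENNReal Topology

/-- **Measure-theoretic core of Theorem 6.2 (nonintegrability above the
critical exponent).** Assume `μ` is doubling and reverse-doubling (with factor
`2`) at `x₀` for radii up to `R₀`, let `1 < p < s` and `τ ≥ s(p−1)/(s−p)`, and
suppose `μ(B_{r_j}) ≤ C r_j^s` along a sequence of positive radii `r_j → 0`.
Then `∫_{B(x₀,R₀)} (d(x,x₀)^p/μ(B_{d(x,x₀)}))^{τ/(p−1)} dμ(x) = ∞`. -/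
theorem green_nonintegrable_above_critical_exponent
    {X : Type*} [MetricSpace X] [MeasurableSpace X] [BorelSpace X]
    (μ : Measure X) (x₀ : X)
    (hpos : ∀ r : ℝ, 0 < r → 0 < μ (ball x₀ r))
    (hfin : ∀ r : ℝ, μ (ball x₀ r) < ⊤)
    (R₀ : ℝ) (hR₀ : 0 < R₀)
    (Cd : ℝ) (hCd : 1 ≤ Cd)
    (hdbl : ∀ ρ : ℝ, 0 < ρ → ρ ≤ R₀ →
      μ (ball x₀ (2 * ρ)) ≤ ENNReal.ofReal Cd * μ (ball x₀ ρ))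
    (c : ℝ) (hc : 1 < c)
    (hrev : ∀ ρ : ℝ, 0 < ρ → ρ ≤ R₀ →
      ENNReal.ofReal c * μ (ball x₀ ρ) ≤ μ (ball x₀ (2 * ρ)))
    (p s τ : ℝ) (hp : 1 < p) (hps : p < s) (hτ : s * (p - 1) / (s - p) ≤ τ)
    (C : ℝ) (hC : 0 < C) (rj : ℕ → ℝ) (hrjpos : ∀ j, 0 < rj j)
    (hrjlim : Tendsto rj atTop (𝓝 0))
    (hrjmass : ∀ j, μ (ball x₀ (rj j)) ≤ ENNReal.ofReal (C * rj j ^ s)) :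
    (∫⁻ x in ball x₀ R₀,
        (ENNReal.ofReal (dist x x₀ ^ p) / μ (ball x₀ (dist x x₀))) ^ (τ / (p - 1)) ∂μ)
      = ⊤ := by
  have hp0 : (0:ℝ) < p - 1 := by linarith
  have hsp0 : (0:ℝ) < s - p := by linarith
  have hc0 : (0:ℝ) < c := lt_trans one_pos hc
  set q : ℝ := τ / (p - 1) with hq_def
  have hq_lb : s ≤ q * (s - p) := by
    rw [hq_def, div_mul_eq_mul_div, le_div_iff₀ hp0]
    rw [div_le_iff₀ hsp0] at hτ
    linarith
  have hq1 : (1:ℝ) < q := by nlinarith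
  have hq0 : (0:ℝ) < q := lt_trans one_pos hq1
  have he : p * q + s * (1 - q) ≤ 0 := by nlinarith
  have hθ : (0:ℝ) < 1 - 1/c := by
    rw [sub_pos]
    exact (div_lt_one hc0).mpr hc
  set ε : ℝ := (1 - 1/c) * (1/2:ℝ) ^ (p*q) * C ^ (1-q) with hε_def
  have hε : 0 < ε := by
    apply mul_pos (mul_pos hθ (Real.rpow_pos_of_pos one_half_pos _))
    exact Real.rpow_pos_of_pos hC _
  -- construct the sequence of radii
  have key : ∀ δ : ℝ, 0 < δ → ∃ r : ℝ, 0 < r ∧ r < δ ∧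
      μ (ball x₀ r) ≤ ENNReal.ofReal (C * r ^ s) := by
    intro δ hδ
    obtain ⟨j, hj⟩ := (hrjlim.eventually (gt_mem_nhds hδ)).exists
    exact ⟨rj j, hrjpos j, hj, hrjmass j⟩
  choose! g hg0 hg1 hg2 using key
  set t : ℕ → ℝ := fun n => Nat.rec (g (min 1 R₀)) (fun _ r => g (r / 2)) n with ht_def
  have hmin : (0:ℝ) < min 1 R₀ := lt_min one_pos hR₀
  have htpos : ∀ n, 0 < t n ∧ t n < min 1 R₀ := by
    intro n
    induction n with
    | zero => exact ⟨hg0 _ hmin, hg1 _ hmin⟩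
    | succ n ih =>
      have h2 : 0 < t n / 2 := by linarith [ih.1]
      refine ⟨hg0 _ h2, lt_trans (hg1 _ h2) ?_⟩
      linarith [ih.1, ih.2]
  have htmass : ∀ n, μ (ball x₀ (t n)) ≤ ENNReal.ofReal (C * t n ^ s) := by
    intro n
    cases n with
    | zero => exact hg2 _ hmin
    | succ n => exact hg2 _ (by linarith [(htpos n).1])
  have htdec : ∀ n, t (n+1) < t n / 2 := fun n => hg1 _ (by linarith [(htpos n).1])
  have htanti : StrictAnti t := strictAnti_nat_of_succ_lt fun n => by
    have := htdec n; linarith [(htpos n).1]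
  -- the annuli
  set A : ℕ → Set X := fun k => ball x₀ (t k) \ ball x₀ (t k / 2) with hA_def
  have hAmeas : ∀ k, MeasurableSet (A k) := fun k =>
    measurableSet_ball.diff measurableSet_ball
  have hA_sub : ∀ k, A k ⊆ ball x₀ R₀ := by
    intro k
    refine Set.diff_subset.trans (ball_subset_ball ?_)
    exact le_of_lt ((htpos k).2.trans_le (min_le_right _ _))
  have hd : ∀ k l, k < l → Disjoint (A k) (A l) := by
    intro k l hkl
    have h1 : t l ≤ t (k+1) := htanti.antitone hkl
    have h2 : t l < t k / 2 := lt_of_le_of_lt h1 (htdec k)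
    have h3 : A l ⊆ ball x₀ (t k / 2) :=
      Set.diff_subset.trans (ball_subset_ball h2.le)
    exact (Set.disjoint_sdiff_left).mono_right h3
  have hdisj : Pairwise (Function.onFun Disjoint A) := by
    intro k l hkl
    rcases hkl.lt_or_gt with h | h
    · exact hd k l h
    · exact (hd l k h).symm
  -- the main estimate on each annulus
  have hmain : ∀ k, ENNReal.ofReal ε ≤
      ∫⁻ x in A k, (ENNReal.ofReal (dist x x₀ ^ p) / μ (ball x₀ (dist x x₀))) ^ q ∂μ := by
    intro k
    set a : ℝ := t k with ha_def
    have ha0 : 0 < a := (htpos k).1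
    have ha1 : a ≤ 1 := le_of_lt ((htpos k).2.trans_le (min_le_left _ _))
    have haR : a ≤ R₀ := le_of_lt ((htpos k).2.trans_le (min_le_right _ _))
    set μk : ℝ≥0∞ := μ (ball x₀ a) with hμk_def
    have hμk0 : μk ≠ 0 := (hpos a ha0).ne'
    have hμkT : μk ≠ ⊤ := (hfin a).ne
    set Xr : ℝ := (a/2) ^ p with hXr_def
    have hXr0 : 0 < Xr := Real.rpow_pos_of_pos (by linarith) _
    set M : ℝ := C * a ^ s with hM_def
    have hM0 : 0 < M := mul_pos hC (Real.rpow_pos_of_pos ha0 _)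
    have hμkM : μk ≤ ENNReal.ofReal M := htmass k
    -- pointwise lower bound on the annulus
    have hpt : ∀ x ∈ A k, (ENNReal.ofReal Xr / μk) ^ q ≤
        (ENNReal.ofReal (dist x x₀ ^ p) / μ (ball x₀ (dist x x₀))) ^ q := by
      intro x hx
      obtain ⟨hx1, hx2⟩ := hx
      rw [mem_ball] at hx1
      have hdist : a / 2 ≤ dist x x₀ := le_of_not_gt fun h => hx2 (mem_ball.mpr h)
      refine ENNReal.rpow_le_rpow (ENNReal.div_le_div ?_ ?_) hq0.le
      · exact ENNReal.ofReal_le_ofReal (Real.rpow_le_rpow (by linarith) hdist (by linarith))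
      · exact measure_mono (ball_subset_ball hx1.le)
    -- measure of the annulus
    have hhalf : μ (ball x₀ (a/2)) ≤ ENNReal.ofReal (1/c) * μk := by
      have h1 := hrev (a/2) (by linarith) (by linarith)
      rw [show (2:ℝ) * (a/2) = a by ring] at h1
      have hcne : ENNReal.ofReal c ≠ 0 := by
        simp only [ne_eq, ENNReal.ofReal_eq_zero, not_le]; exact hc0
      calc μ (ball x₀ (a/2))
          = (ENNReal.ofReal c)⁻¹ * (ENNReal.ofReal c * μ (ball x₀ (a/2))) := by
            rw [← mul_assoc, ENNReal.inv_mul_cancel hcne ENNReal.ofReal_ne_top, one_mul]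
        _ ≤ (ENNReal.ofReal c)⁻¹ * μk := mul_le_mul_right h1 _
        _ = ENNReal.ofReal (1/c) * μk := by
            rw [one_div, ENNReal.ofReal_inv_of_pos hc0]
    have hAk : ENNReal.ofReal (1 - 1/c) * μk ≤ μ (A k) := by
      have hm : μ (A k) = μk - μ (ball x₀ (a/2)) :=
        measure_diff (ball_subset_ball (by linarith)) measurableSet_ball.nullMeasurableSet
          (hfin _).ne
      rw [hm]
      refine ENNReal.le_sub_of_add_le_right (hfin _).ne ?_
      calc ENNReal.ofReal (1 - 1/c) * μk + μ (ball x₀ (a/2))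
          ≤ ENNReal.ofReal (1 - 1/c) * μk + ENNReal.ofReal (1/c) * μk :=
            add_le_add le_rfl hhalf
        _ = (ENNReal.ofReal (1 - 1/c) + ENNReal.ofReal (1/c)) * μk := by ring
        _ = μk := by
            rw [← ENNReal.ofReal_add (by linarith) (by positivity),
              show (1:ℝ) - 1/c + 1/c = 1 by ring, ENNReal.ofReal_one, one_mul]
    -- the antitone rpow estimate
    have hanti : (ENNReal.ofReal M) ^ (1-q) ≤ μk ^ (1-q) := by
      rw [show (1:ℝ)-q = -(q-1) by ring, ENNReal.rpow_neg, ENNReal.rpow_neg]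
      exact ENNReal.inv_le_inv.mpr (ENNReal.rpow_le_rpow hμkM (by linarith))
    have hsplit : μk * (μk ^ q)⁻¹ = μk ^ (1 - q) := by
      calc μk * (μk ^ q)⁻¹ = μk ^ (1:ℝ) * μk ^ (-q) := by
            rw [ENNReal.rpow_one, ENNReal.rpow_neg]
        _ = μk ^ (1 + -q) := (ENNReal.rpow_add _ _ hμk0 hμkT).symm
        _ = μk ^ (1 - q) := by ring_nf
    -- the real computation
    have h1a : (1:ℝ) ≤ a ^ (p*q + s*(1-q)) :=
      Real.one_le_rpow_of_pos_of_le_one_of_nonpos ha0 ha1 he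
    have hreal : ε ≤ (1 - 1/c) * (Xr ^ q * M ^ (1-q)) := by
      have e1 : Xr ^ q = a ^ (p*q) * (1/2:ℝ) ^ (p*q) := by
        rw [hXr_def, ← Real.rpow_mul (by linarith : (0:ℝ) ≤ a/2),
          show a/2 = a * (1/2) by ring,
          Real.mul_rpow ha0.le (by norm_num : (0:ℝ) ≤ 1/2)]
      have e2 : M ^ (1-q) = C ^ (1-q) * a ^ (s*(1-q)) := by
        rw [hM_def, Real.mul_rpow hC.le (Real.rpow_nonneg ha0.le s),
          ← Real.rpow_mul ha0.le]
      have e3 : a ^ (p*q + s*(1-q)) = a ^ (p*q) * a ^ (s*(1-q)) :=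
        Real.rpow_add ha0 _ _
      have expand : (1 - 1/c) * (Xr ^ q * M ^ (1-q)) = ε * a ^ (p*q + s*(1-q)) := by
        rw [e1, e2, e3, hε_def]; ring
      rw [expand]
      nlinarith
    -- put things together
    have halg : ENNReal.ofReal ε ≤
        (ENNReal.ofReal Xr / μk) ^ q * (ENNReal.ofReal (1 - 1/c) * μk) := by
      calc ENNReal.ofReal ε
          ≤ ENNReal.ofReal ((1 - 1/c) * (Xr ^ q * M ^ (1-q))) :=
            ENNReal.ofReal_le_ofReal hreal
        _ = ENNReal.ofReal (1 - 1/c) * (ENNReal.ofReal Xr ^ q * (ENNReal.ofReal M) ^ (1-q)) := by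
            rw [ENNReal.ofReal_mul hθ.le, ENNReal.ofReal_mul (Real.rpow_nonneg hXr0.le _),
              ENNReal.ofReal_rpow_of_pos hXr0, ENNReal.ofReal_rpow_of_pos hM0]
        _ ≤ ENNReal.ofReal (1 - 1/c) * (ENNReal.ofReal Xr ^ q * μk ^ (1-q)) := by
            exact mul_le_mul_right (mul_le_mul_right hanti _) _
        _ = ENNReal.ofReal Xr ^ q * (μk ^ q)⁻¹ * (ENNReal.ofReal (1 - 1/c) * μk) := by
            rw [← hsplit]; ring
        _ = (ENNReal.ofReal Xr / μk) ^ q * (ENNReal.ofReal (1 - 1/c) * μk) := by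
            rw [ENNReal.div_rpow_of_nonneg _ _ hq0.le,
              div_eq_mul_inv (ENNReal.ofReal Xr ^ q) (μk ^ q)]
    calc ENNReal.ofReal ε
        ≤ (ENNReal.ofReal Xr / μk) ^ q * (ENNReal.ofReal (1 - 1/c) * μk) := halg
      _ ≤ (ENNReal.ofReal Xr / μk) ^ q * μ (A k) := mul_le_mul_right hAk _
      _ = ∫⁻ _ in A k, (ENNReal.ofReal Xr / μk) ^ q ∂μ := (setLIntegral_const _ _).symm
      _ ≤ ∫⁻ x in A k, (ENNReal.ofReal (dist x x₀ ^ p) / μ (ball x₀ (dist x x₀))) ^ q ∂μ :=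
          setLIntegral_mono' (hAmeas k) hpt
  -- sum over the annuli
  have hUnion : ∫⁻ x in ⋃ k, A k,
      (ENNReal.ofReal (dist x x₀ ^ p) / μ (ball x₀ (dist x x₀))) ^ q ∂μ
      = ∑' k, ∫⁻ x in A k,
          (ENNReal.ofReal (dist x x₀ ^ p) / μ (ball x₀ (dist x x₀))) ^ q ∂μ :=
    lintegral_iUnion hAmeas hdisj _
  have htop : (⊤:ℝ≥0∞) ≤ ∫⁻ x in ball x₀ R₀,
      (ENNReal.ofReal (dist x x₀ ^ p) / μ (ball x₀ (dist x x₀))) ^ q ∂μ := by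
    calc (⊤:ℝ≥0∞) = ∑' _ : ℕ, ENNReal.ofReal ε :=
          (ENNReal.tsum_const_eq_top_of_ne_zero (by
            simp only [ne_eq, ENNReal.ofReal_eq_zero, not_le]; exact hε)).symm
      _ ≤ ∑' k, ∫⁻ x in A k,
            (ENNReal.ofReal (dist x x₀ ^ p) / μ (ball x₀ (dist x x₀))) ^ q ∂μ :=
          ENNReal.tsum_le_tsum hmain
      _ = ∫⁻ x in ⋃ k, A k,
            (ENNReal.ofReal (dist x x₀ ^ p) / μ (ball x₀ (dist x x₀))) ^ q ∂μ := hUnion.symm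
      _ ≤ _ := lintegral_mono_set (Set.iUnion_subset hA_sub)
  exact top_le_iff.mp htop
end

section
/- Let 1 < p < s̄ and set τ := s̄(p−1)/(s̄−p); assume τ > 1. Let q > 0 and C_q ≥ 1, and let (b_k)_{k≥1} be a sequence of positive real numbers satisfying b_k ≤ C_q·2^{(j−k)q}·b_j for all integers 1 ≤ j ≤ k. Then there exists a constant C > 0, depending only on p, s̄, q and C_q, such that Σ_{k=1}^{∞} ( Σ_{j=1}^{k} ( 2^{−jp} / b_j )^{1/(p−1)} )^{τ} · b_k ≤ C · Σ_{j=1}^{∞} ( 2^{−j s̄} / b_j )^{p/(s̄−p)}, as an inequality in [0,∞]. -/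
/-!
With `x_j = (2^{-jp}/b_j)^{1/(p-1)}` one has `x_j^τ b_j = (2^{-js}/b_j)^{p/(s-p)}`.
Hölder's inequality with the geometric weights `θ^{k-j}` gives
`(∑_{j ≤ k} x_j)^τ ≤ (∑_m θ^m)^{τ-1} ∑_{j ≤ k} θ^{(1-τ)(k-j)} x_j^τ`. The decay
`b_k ≤ C ρ^{k-j} b_j` with `ρ = 2^{-q}` absorbs the growing factor `θ^{(1-τ)(k-j)}` when
`θ^{τ-1} = ρ^{1/2}`, and after exchanging the order of summation what is left is a convolution
with the summable sequence `ρ^{m/2}`.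
-/

open scoped ENNReal
open Finset

namespace ENNReal

theorem tsum_mul_tsum_eq_tsum_sum_range (f g : ℕ → ℝ≥0∞) :
    (∑' n, f n) * ∑' n, g n = ∑' n, ∑ k ∈ range (n + 1), f k * g (n - k) := by
  simp_rw [← Nat.sum_antidiagonal_eq_sum_range_succ fun k l => f k * g l,
    ← Finset.tsum_subtype]
  rw [← ENNReal.tsum_sigma' (β := fun n : ℕ => antidiagonal n) (fun x => f x.2.1.1 * g x.2.1.2),
    ← ENNReal.tsum_mul_right]
  simp_rw [← ENNReal.tsum_mul_left]
  rw [← ENNReal.tsum_prod' (f := fun p : ℕ × ℕ => f p.1 * g p.2)]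
  exact (HasAntidiagonal.sigmaAntidiagonalEquivProd.tsum_eq _).symm

theorem tsum_geometric_ne_zero (r : ℝ≥0∞) : ∑' m, r ^ m ≠ 0 := by
  rw [ENNReal.tsum_geometric]
  exact ENNReal.inv_ne_zero.2 (ENNReal.sub_ne_top one_ne_top)

theorem rpow_sum_le_rpow_sum_mul_sum_rpow_mul {ι : Type*} (s : Finset ι) {τ : ℝ} (hτ : 1 ≤ τ)
    {w : ι → ℝ≥0∞} (hw₀ : ∀ i ∈ s, w i ≠ 0) (hw : ∀ i ∈ s, w i ≠ ⊤) (x : ι → ℝ≥0∞) :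
    (∑ i ∈ s, x i) ^ τ ≤ (∑ i ∈ s, w i) ^ (τ - 1) * ∑ i ∈ s, w i ^ (1 - τ) * x i ^ τ := by
  have hτ₀ : 0 < τ := by linarith
  have hx : ∑ i ∈ s, x i = ∑ i ∈ s, w i * (x i / w i) :=
    sum_congr rfl fun i hi => (ENNReal.mul_div_cancel (hw₀ i hi) (hw i hi)).symm
  have hterm : ∀ i ∈ s, w i * (x i / w i) ^ τ = w i ^ (1 - τ) * x i ^ τ := fun i hi => by
    rw [div_rpow_of_nonneg _ _ hτ₀.le, rpow_sub _ _ (hw₀ i hi) (hw i hi), rpow_one,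
      ENNReal.div_eq_inv_mul, ENNReal.div_eq_inv_mul]
    ring
  calc (∑ i ∈ s, x i) ^ τ
      ≤ ((∑ i ∈ s, w i) ^ (1 - τ⁻¹) * (∑ i ∈ s, w i * (x i / w i) ^ τ) ^ τ⁻¹) ^ τ := by
        rw [hx]
        exact rpow_le_rpow (inner_le_weight_mul_Lp_of_nonneg s hτ w _) hτ₀.le
    _ = (∑ i ∈ s, w i) ^ (τ - 1) * ∑ i ∈ s, w i ^ (1 - τ) * x i ^ τ := by
        rw [mul_rpow_of_nonneg _ _ hτ₀.le, ← rpow_mul, ← rpow_mul, sum_congr rfl hterm,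
          inv_mul_cancel₀ hτ₀.ne', rpow_one, sub_mul, inv_mul_cancel₀ hτ₀.ne', one_mul]

theorem rpow_sum_range_le_tsum_geometric {τ : ℝ} (hτ : 1 ≤ τ) {θ : ℝ≥0∞} (hθ₀ : θ ≠ 0)
    (hθ : θ ≠ ⊤) (x : ℕ → ℝ≥0∞) (k : ℕ) :
    (∑ j ∈ range (k + 1), x j) ^ τ ≤
      (∑' m, θ ^ m) ^ (τ - 1) * ∑ j ∈ range (k + 1), (θ ^ (1 - τ)) ^ (k - j) * x j ^ τ := by
  have hweights : ∑ j ∈ range (k + 1), θ ^ (k - j) ≤ ∑' m, θ ^ m := by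
    have hreflect := sum_range_reflect (θ ^ ·) (k + 1)
    simp only [add_tsub_cancel_right] at hreflect
    exact hreflect ▸ ENNReal.sum_le_tsum _
  have hpow : ∀ j, (θ ^ (k - j)) ^ (1 - τ) = (θ ^ (1 - τ)) ^ (k - j) := fun j => by
    rw [← rpow_natCast_mul, mul_comm, rpow_mul_natCast]
  calc (∑ j ∈ range (k + 1), x j) ^ τ
      ≤ (∑ j ∈ range (k + 1), θ ^ (k - j)) ^ (τ - 1) *
          ∑ j ∈ range (k + 1), (θ ^ (k - j)) ^ (1 - τ) * x j ^ τ :=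
        rpow_sum_le_rpow_sum_mul_sum_rpow_mul _ hτ (fun _ _ => pow_ne_zero _ hθ₀)
          (fun _ _ => pow_ne_top hθ) x
    _ ≤ _ := by
        simp only [hpow]
        gcongr

theorem tsum_sum_range_pow_mul_le {a B : ℕ → ℝ≥0∞} {C ρ r : ℝ≥0∞}
    (hB : ∀ j k, j ≤ k → B k ≤ C * ρ ^ (k - j) * B j) :
    ∑' k, (∑ j ∈ range (k + 1), r ^ (k - j) * a j) * B k ≤
      C * (∑' m, (r * ρ) ^ m) * ∑' j, a j * B j := by
  calc ∑' k, (∑ j ∈ range (k + 1), r ^ (k - j) * a j) * B k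
      ≤ ∑' k, ∑ j ∈ range (k + 1), a j * B j * (C * (r * ρ) ^ (k - j)) := by
        refine ENNReal.tsum_le_tsum fun k => ?_
        rw [sum_mul]
        refine sum_le_sum fun j hj => ?_
        calc r ^ (k - j) * a j * B k ≤ r ^ (k - j) * a j * (C * ρ ^ (k - j) * B j) := by
              gcongr
              exact hB j k (Nat.lt_succ_iff.1 (mem_range.1 hj))
          _ = a j * B j * (C * (r * ρ) ^ (k - j)) := by ring
    _ = (∑' j, a j * B j) * ∑' m, C * (r * ρ) ^ m :=
        (tsum_mul_tsum_eq_tsum_sum_range (fun j => a j * B j) fun m => C * (r * ρ) ^ m).symm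
    _ = C * (∑' m, (r * ρ) ^ m) * ∑' j, a j * B j := by rw [ENNReal.tsum_mul_left, mul_comm]

theorem tsum_rpow_sum_range_mul_le {τ : ℝ} (hτ : 1 ≤ τ) {θ ρ C : ℝ≥0∞} (hθ₀ : θ ≠ 0)
    (hθ : θ ≠ ⊤) {x B : ℕ → ℝ≥0∞} (hB : ∀ j k, j ≤ k → B k ≤ C * ρ ^ (k - j) * B j) :
    ∑' k, (∑ j ∈ range (k + 1), x j) ^ τ * B k ≤
      (∑' m, θ ^ m) ^ (τ - 1) * C * (∑' m, (θ ^ (1 - τ) * ρ) ^ m) * ∑' j, x j ^ τ * B j :=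
  calc ∑' k, (∑ j ∈ range (k + 1), x j) ^ τ * B k
      ≤ ∑' k, (∑' m, θ ^ m) ^ (τ - 1) *
          ((∑ j ∈ range (k + 1), (θ ^ (1 - τ)) ^ (k - j) * x j ^ τ) * B k) := by
        refine ENNReal.tsum_le_tsum fun k => ?_
        rw [← mul_assoc]
        gcongr
        exact rpow_sum_range_le_tsum_geometric hτ hθ₀ hθ x k
    _ ≤ _ := by
        rw [ENNReal.tsum_mul_left, mul_assoc _ C, mul_assoc]
        gcongr
        exact tsum_sum_range_pow_mul_le hB

theorem exists_tsum_rpow_sum_range_mul_le {τ : ℝ} (hτ : 1 < τ) {ρ C : ℝ≥0∞} (hρ₀ : ρ ≠ 0)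
    (hρ : ρ < 1) (hC₀ : C ≠ 0) (hC : C ≠ ⊤) :
    ∃ K : ℝ≥0∞, K ≠ 0 ∧ K ≠ ⊤ ∧ ∀ x B : ℕ → ℝ≥0∞,
      (∀ j k, j ≤ k → B k ≤ C * ρ ^ (k - j) * B j) →
      ∑' k, (∑ j ∈ range (k + 1), x j) ^ τ * B k ≤ K * ∑' j, x j ^ τ * B j := by
  have hτ₁ : 0 < τ - 1 := by linarith
  have hρ_top : ρ ≠ ⊤ := (hρ.trans one_lt_top).ne
  set θ := ρ ^ (2 * (τ - 1))⁻¹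
  have hθ₀ : θ ≠ 0 := (rpow_pos (pos_iff_ne_zero.2 hρ₀) hρ_top).ne'
  have hθ : θ ≠ ⊤ := rpow_ne_top_of_nonneg (by positivity) hρ_top
  have hθ₁ : θ < 1 := rpow_lt_one hρ (by positivity)
  have hθρ : θ ^ (1 - τ) * ρ = ρ ^ (2⁻¹ : ℝ) :=
    calc θ ^ (1 - τ) * ρ = ρ ^ ((2 * (τ - 1))⁻¹ * (1 - τ)) * ρ ^ (1 : ℝ) := by
          rw [rpow_one, ← rpow_mul]
      _ = ρ ^ (2⁻¹ : ℝ) := by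
          rw [← rpow_add _ _ hρ₀ hρ_top]
          congr 1
          field_simp
          ring
  have hgeom_θ : ∑' m, θ ^ m ≠ ⊤ := (tsum_geometric_lt_top.2 hθ₁).ne
  have hgeom_ρ : ∑' m, (θ ^ (1 - τ) * ρ) ^ m ≠ ⊤ := by
    rw [hθρ]
    exact (tsum_geometric_lt_top.2 (rpow_lt_one hρ (by norm_num))).ne
  refine ⟨(∑' m, θ ^ m) ^ (τ - 1) * C * ∑' m, (θ ^ (1 - τ) * ρ) ^ m,
    mul_ne_zero (mul_ne_zero (rpow_pos (pos_iff_ne_zero.2 (tsum_geometric_ne_zero θ))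
      hgeom_θ).ne' hC₀) (tsum_geometric_ne_zero _),
    mul_ne_top (mul_ne_top (rpow_ne_top_of_nonneg hτ₁.le hgeom_θ) hC) hgeom_ρ,
    fun x B hB => tsum_rpow_sum_range_mul_le hτ.le hθ₀ hθ hB⟩

theorem ofReal_rpow_rpow_mul_ofReal {a b p s : ℝ} (ha : 0 < a) (hb : 0 < b) (hp : p ≠ 1)
    (hps : p ≠ s) :
    (ENNReal.ofReal (a ^ p / b) ^ (1 / (p - 1))) ^ (s * (p - 1) / (s - p)) * ENNReal.ofReal b =
      ENNReal.ofReal (a ^ s / b) ^ (p / (s - p)) := by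
  have hp₁ : p - 1 ≠ 0 := sub_ne_zero.2 hp
  have hsp : s - p ≠ 0 := sub_ne_zero.2 hps.symm
  have hexp : 1 / (p - 1) * (s * (p - 1) / (s - p)) = p / (s - p) + 1 := by field_simp; ring
  rw [← rpow_mul, hexp, ENNReal.ofReal_rpow_of_pos (by positivity),
    ENNReal.ofReal_rpow_of_pos (by positivity), ← ENNReal.ofReal_mul (by positivity)]
  congr 1
  rw [Real.div_rpow (by positivity) hb.le, Real.div_rpow (by positivity) hb.le,
    ← Real.rpow_mul ha.le, ← Real.rpow_mul ha.le, Real.rpow_add_one hb.ne']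
  field_simp
  ring_nf

theorem ofReal_succ_le_mul_pow_mul_ofReal_succ {b : ℕ → ℝ} {C q : ℝ} (hC : 0 ≤ C)
    (hb : ∀ j k : ℕ, 1 ≤ j → j ≤ k → b k ≤ C * 2 ^ (((j : ℝ) - (k : ℝ)) * q) * b j)
    {j k : ℕ} (hjk : j ≤ k) :
    ENNReal.ofReal (b (k + 1)) ≤
      ENNReal.ofReal C * (2 ^ (-q)) ^ (k - j) * ENNReal.ofReal (b (j + 1)) := by
  have hexp : (((j + 1 : ℕ) : ℝ) - ((k + 1 : ℕ) : ℝ)) * q = -q * ((k - j : ℕ) : ℝ) := by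
    push_cast [Nat.cast_sub hjk]
    ring
  calc ENNReal.ofReal (b (k + 1))
      ≤ ENNReal.ofReal (C * 2 ^ (-q * ((k - j : ℕ) : ℝ)) * b (j + 1)) := by
        rw [← hexp]
        exact ENNReal.ofReal_le_ofReal (hb _ _ (by omega) (by omega))
    _ = _ := by
        rw [ENNReal.ofReal_mul (by positivity), ENNReal.ofReal_mul hC,
          ← ENNReal.ofReal_rpow_of_pos two_pos, ENNReal.ofReal_ofNat, ENNReal.rpow_mul_natCast]

end ENNReal

open ENNReal

/-- **Discrete Hölder-type inequality from the proof of Theorem 6.4(a)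
(case `τ_p > 1`).** Let `1 < p < s̄`, `τ = s̄(p−1)/(s̄−p) > 1`, `q > 0` and
`C_q ≥ 1`. Then there is `C > 0`, depending only on `p, s̄, q, C_q`, such that
for every positive sequence `(b_k)_{k ≥ 1}` with
`b_k ≤ C_q 2^{(j−k)q} b_j` for `1 ≤ j ≤ k`,
`Σ_{k=1}^∞ (Σ_{j=1}^k (2^{−jp}/b_j)^{1/(p−1)})^τ b_k
   ≤ C Σ_{j=1}^∞ (2^{−j s̄}/b_j)^{p/(s̄−p)}`
as an inequality in `[0,∞]`. -/
theorem discrete_holder_sum_estimate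
    (p s q Cq : ℝ) (hp : 1 < p) (hps : p < s)
    (hτ : 1 < s * (p - 1) / (s - p)) (hq : 0 < q) (hCq : 1 ≤ Cq) :
    ∃ C : ℝ, 0 < C ∧
      ∀ b : ℕ → ℝ, (∀ k, 0 < b k) →
        (∀ j k : ℕ, 1 ≤ j → j ≤ k → b k ≤ Cq * 2 ^ (((j : ℝ) - (k : ℝ)) * q) * b j) →
        (∑' k : ℕ,
            (∑ j ∈ Finset.Icc 1 (k + 1),
                ENNReal.ofReal ((2 : ℝ) ^ (-(j : ℝ) * p) / b j) ^ (1 / (p - 1)))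
              ^ (s * (p - 1) / (s - p)) * ENNReal.ofReal (b (k + 1)))
          ≤ ENNReal.ofReal C *
              ∑' j : ℕ,
                ENNReal.ofReal ((2 : ℝ) ^ (-((j + 1 : ℕ) : ℝ) * s) / b (j + 1))
                  ^ (p / (s - p)) := by
  obtain ⟨K, hK₀, hK, hsum⟩ := exists_tsum_rpow_sum_range_mul_le hτ (ρ := 2 ^ (-q))
    (C := ENNReal.ofReal Cq) (by simp) (rpow_lt_one_of_one_lt_of_neg one_lt_two (by linarith))
    (ofReal_pos.2 (by linarith)).ne' ofReal_ne_top
  refine ⟨K.toReal, toReal_pos hK₀ hK, fun b hb hbb => ?_⟩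
  have hterm : ∀ j : ℕ, (ENNReal.ofReal (2 ^ (-(j : ℝ) * p) / b j) ^ (1 / (p - 1))) ^
      (s * (p - 1) / (s - p)) * ENNReal.ofReal (b j) =
        ENNReal.ofReal (2 ^ (-(j : ℝ) * s) / b j) ^ (p / (s - p)) := fun j => by
    rw [Real.rpow_mul zero_le_two, Real.rpow_mul zero_le_two]
    exact ofReal_rpow_rpow_mul_ofReal (by positivity) (hb j) hp.ne' hps.ne
  have hreindex : ∀ (f : ℕ → ℝ≥0∞) (k : ℕ),
      ∑ j ∈ Icc 1 (k + 1), f j = ∑ j ∈ range (k + 1), f (j + 1) := fun f k => by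
    rw [range_eq_Ico, sum_Ico_add' f, ← Ico_add_one_right_eq_Icc]
  rw [ofReal_toReal hK]
  simp_rw [hreindex, ← hterm]
  exact hsum _ _ fun j k hjk => ofReal_succ_le_mul_pow_mul_ofReal_succ (by linarith) hbb hjk
end
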